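/- For every Turing degree a there is a pair (R, S) of equivalence relations on ℕ such that Spec⇒(R,S) = {d : a ≤ d}, i.e., every Turing degree is realized as a degree of reducibility whose spectrum is exactly the cone above it. -/

import Mathlib

/-- `RecursiveIn' O f` means the partial function `f` is partial recursive in the
(total) oracle `O`. -/
inductive RecursiveIn' (O : ℕ → ℕ) : (ℕ →. ℕ) → Prop
  | zero : RecursiveIn' O (pure 0)
  | succ : RecursiveIn' O Nat.succ
  | left : RecursiveIn' O ↑fun n : ℕ => n.unpair.1
  | right : RecursiveIn' O ↑fun n : ℕ => n.unpair.2
  | oracle : RecursiveIn' O ↑O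
  | pair {f g} : RecursiveIn' O f → RecursiveIn' O g →
      RecursiveIn' O fun n => Nat.pair <$> f n <*> g n
  | comp {f g} : RecursiveIn' O f → RecursiveIn' O g →
      RecursiveIn' O fun n => g n >>= f
  | prec {f g} : RecursiveIn' O f → RecursiveIn' O g →
      RecursiveIn' O (Nat.unpaired fun a n =>
        n.rec (f a) fun y IH => do let i ← IH; g (Nat.pair a (Nat.pair y i)))
  | rfind {f} : RecursiveIn' O f →
      RecursiveIn' O fun a => Nat.rfind fun n => (fun m => m = 0) <$> f (Nat.pair a n)

/-- Turing reducibility between total functions on `ℕ`. -/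
def TuringReducible' (f g : ℕ → ℕ) : Prop := RecursiveIn' g ↑f

/-- Turing equivalence of total functions on `ℕ`. -/
def TuringEquivalent' (f g : ℕ → ℕ) : Prop := TuringReducible' f g ∧ TuringReducible' g f

theorem TuringReducible'.refl (f : ℕ → ℕ) : TuringReducible' f f := RecursiveIn'.oracle

theorem RecursiveIn'.trans' {f : ℕ →. ℕ} {g h : ℕ → ℕ}
    (hf : RecursiveIn' g f) (hg : TuringReducible' g h) : RecursiveIn' h f := by
  induction hf with
  | zero => exact .zero
  | succ => exact .succ
  | left => exact .left
  | right => exact .right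
  | oracle => exact hg
  | pair _ _ ih₁ ih₂ => exact .pair ih₁ ih₂
  | comp _ _ ih₁ ih₂ => exact .comp ih₁ ih₂
  | prec _ _ ih₁ ih₂ => exact .prec ih₁ ih₂
  | rfind _ ih => exact .rfind ih

theorem TuringReducible'.trans {f g h : ℕ → ℕ}
    (h₁ : TuringReducible' f g) (h₂ : TuringReducible' g h) : TuringReducible' f h :=
  RecursiveIn'.trans' h₁ h₂

/-- The setoid of Turing equivalence. -/
def turingSetoid : Setoid (ℕ → ℕ) :=
  ⟨TuringEquivalent',
    fun f => ⟨.refl f, .refl f⟩,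
    fun ⟨h₁, h₂⟩ => ⟨h₂, h₁⟩,
    fun ⟨a₁, a₂⟩ ⟨b₁, b₂⟩ => ⟨a₁.trans b₁, b₂.trans a₂⟩⟩

/-- Turing degrees. -/
def TuringDegree' : Type := Quotient turingSetoid

/-- The Turing degree of a total function. -/
def TuringDegree'.deg (f : ℕ → ℕ) : TuringDegree' := Quotient.mk turingSetoid f

instance : LE TuringDegree' :=
  ⟨fun d₁ d₂ =>
    Quotient.liftOn₂ d₁ d₂ TuringReducible'
      (fun _ _ _ _ h h' =>
        propext ⟨fun hr => (h.2.trans hr).trans h'.1, fun hr => (h.1.trans hr).trans h'.2⟩)⟩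

instance : LT TuringDegree' := ⟨fun d₁ d₂ => d₁ ≤ d₂ ∧ ¬d₂ ≤ d₁⟩

/-- The least Turing degree. -/
def TuringDegree'.zero : TuringDegree' := TuringDegree'.deg fun _ => 0

/-- A partial function is computable in a Turing degree if it is recursive in some
(equivalently, any) representative of that degree. -/
def TuringDegree'.ComputableIn (d : TuringDegree') (f : ℕ →. ℕ) : Prop :=
  Quotient.liftOn d (fun g => RecursiveIn' g f)
    (fun _ _ h => propext ⟨fun hr => hr.trans' h.1, fun hr => hr.trans' h.2⟩)

open Classical in
/-- The characteristic function of a set of naturals. -/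
noncomputable def charFun (A : Set ℕ) : ℕ → ℕ := fun n => if n ∈ A then 1 else 0

/-- Turing reducibility between sets of naturals. -/
noncomputable def SetTuringReducible (A B : Set ℕ) : Prop :=
  TuringReducible' (charFun A) (charFun B)

/-- The Turing degree of a set of naturals. -/
noncomputable def TuringDegree'.degSet (A : Set ℕ) : TuringDegree' :=
  TuringDegree'.deg (charFun A)

/-- `R` is `d`-computably reducible to `S`. -/
def ReducibleIn (d : TuringDegree') (R S : ℕ → ℕ → Prop) : Prop :=
  ∃ f : ℕ → ℕ, d.ComputableIn ↑f ∧ ∀ x y, R x y ↔ S (f x) (f y)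

/-- The reducibility spectrum of the pair `(R, S)`. -/
def SpecRed (R S : ℕ → ℕ → Prop) : Set TuringDegree' := {d | ReducibleIn d R S}

/-- The bi-reducibility spectrum of the pair `(R, S)`. -/
def SpecBired (R S : ℕ → ℕ → Prop) : Set TuringDegree' :=
  {d | ReducibleIn d R S ∧ ReducibleIn d S R}

/-- The equivalence relation generated by a set `A`: two numbers are equivalent
iff they are equal or both belong to `A`. -/
def genRel (A : Set ℕ) : ℕ → ℕ → Prop := fun x y => x = y ∨ (x ∈ A ∧ y ∈ A)

/-- A ceer: an equivalence relation whose set of pairs is computably enumerable. -/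
def Ceer (R : ℕ → ℕ → Prop) : Prop :=
  Equivalence R ∧ REPred fun p : ℕ × ℕ => R p.1 p.2

/-- A computably enumerable set of naturals. -/
def CePred (A : Set ℕ) : Prop := REPred (· ∈ A)

/-- A partial transversal of `R`: a set any two distinct elements of which are
`R`-inequivalent. -/
def PartialTransversal (R : ℕ → ℕ → Prop) (A : Set ℕ) : Prop :=
  ∀ x ∈ A, ∀ y ∈ A, x ≠ y → ¬R x y

/-- An introreducible set: an infinite set computable from each of its infinite subsets. -/
def Introreducible (B : Set ℕ) : Prop :=
  B.Infinite ∧ ∀ C : Set ℕ, C ⊆ B → C.Infinite → SetTuringReducible B C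


/-!
Take `R` to be the equivalence relation collapsing the graph of a representative `g` of `a`
to a single class, and `S` to be equality. A reduction of `R` to equality decides the graph
(a point is in the graph iff it is sent to the image of a fixed point of the graph), and
conversely a decision procedure for the graph yields the reduction that sends the graph to `0`
and every other `x` to `x + 1`. Since a total function is computable from its graph by
unbounded search, `R ≤_d S` holds exactly when `g` is computable in `d`.
-/

def codedGraph (g : ℕ → ℕ) : Set ℕ := {m | g m.unpair.1 = m.unpair.2}

theorem codedGraph_nonempty (g : ℕ → ℕ) : (codedGraph g).Nonempty :=
  ⟨Nat.pair 0 (g 0), by simp [codedGraph]⟩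

namespace RecursiveIn'

variable {O : ℕ → ℕ}

theorem of_partrec {f : ℕ →. ℕ} (hf : Nat.Partrec f) : RecursiveIn' O f := by
  induction hf with
  | zero => exact .zero
  | succ => exact .succ
  | left => exact .left
  | right => exact .right
  | pair _ _ ih₁ ih₂ => exact .pair ih₁ ih₂
  | comp _ _ ih₁ ih₂ => exact .comp ih₁ ih₂
  | prec _ _ ih₁ ih₂ => exact .prec ih₁ ih₂
  | rfind _ ih => exact .rfind ih

theorem of_primrec {f : ℕ → ℕ} (hf : Primrec f) : RecursiveIn' O ↑f :=
  of_partrec (Nat.Partrec.of_primrec (Primrec.nat_iff.1 hf))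

theorem comp_total {f g : ℕ → ℕ} (hf : RecursiveIn' O ↑f) (hg : RecursiveIn' O ↑g) :
    RecursiveIn' O ↑(fun n => f (g n)) := by
  refine (congrArg (RecursiveIn' O) ?_).mp (hf.comp hg)
  funext n
  exact Part.bind_some _ _

theorem pair_total {f g : ℕ → ℕ} (hf : RecursiveIn' O ↑f) (hg : RecursiveIn' O ↑g) :
    RecursiveIn' O ↑(fun n => Nat.pair (f n) (g n)) := by
  refine (congrArg (RecursiveIn' O) ?_).mp (hf.pair hg)
  funext n
  simp [PFun.coe_val, Seq.seq]

/-- `g x` is found by unbounded search for the least `y` with `Nat.pair x y` in the graph. -/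
theorem of_charFun_codedGraph {g : ℕ → ℕ}
    (h : RecursiveIn' O ↑(charFun (codedGraph g))) : RecursiveIn' O ↑g := by
  have hsearch := RecursiveIn'.rfind ((of_primrec (f := fun m => 1 - m) (Primrec.nat_sub.comp
    (Primrec.const 1) Primrec.id)).comp_total h)
  refine (congrArg (RecursiveIn' O) ?_).mp hsearch
  funext x
  refine Part.eq_some_iff.2 (Nat.mem_rfind.2 ⟨?_, fun {m} hm => ?_⟩)
  · simp [PFun.coe_val, charFun, codedGraph]
  · simp [PFun.coe_val, charFun, codedGraph, hm.ne']

theorem charFun_codedGraph {g : ℕ → ℕ} (hg : RecursiveIn' O ↑g) :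
    RecursiveIn' O ↑(charFun (codedGraph g)) := by
  have hdecide : Primrec fun m : ℕ => if m.unpair.1 = m.unpair.2.unpair.2 then 1 else 0 :=
    Primrec.ite (Primrec.eq.comp (Primrec.fst.comp Primrec.unpair)
      (Primrec.snd.comp (Primrec.unpair.comp (Primrec.snd.comp Primrec.unpair))))
      (Primrec.const 1) (Primrec.const 0)
  convert (of_primrec hdecide).comp_total
    (pair_total (hg.comp_total .left) (of_primrec (f := id) Primrec.id)) using 2
  funext x
  simp only [charFun, codedGraph, Nat.unpair_pair, Set.mem_ofPred_eq]
  congr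

end RecursiveIn'

theorem TuringDegree'.degSet_codedGraph (g : ℕ → ℕ) :
    TuringDegree'.degSet (codedGraph g) = TuringDegree'.deg g :=
  Quotient.sound ⟨RecursiveIn'.charFun_codedGraph (TuringReducible'.refl g),
    RecursiveIn'.of_charFun_codedGraph (TuringReducible'.refl _)⟩

theorem genRel_equivalence (A : Set ℕ) : Equivalence (genRel A) where
  refl _ := Or.inl rfl
  symm := by
    rintro x y (rfl | ⟨hx, hy⟩)
    exacts [Or.inl rfl, Or.inr ⟨hy, hx⟩]
  trans := by
    rintro x y z (rfl | ⟨hx, hy⟩) (rfl | ⟨hy', hz⟩)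
    exacts [Or.inl rfl, Or.inr ⟨hy', hz⟩, Or.inr ⟨hx, hy⟩, Or.inr ⟨hx, hz⟩]

theorem mem_iff_of_genRel_iff {A : Set ℕ} {f : ℕ → ℕ} (hf : ∀ x y, genRel A x y ↔ f x = f y)
    {a : ℕ} (ha : a ∈ A) (x : ℕ) : x ∈ A ↔ f x = f a := by
  refine ⟨fun hx => (hf x a).1 (Or.inr ⟨hx, ha⟩), fun hfx => ?_⟩
  rcases (hf x a).2 hfx with rfl | ⟨hx, -⟩ <;> assumption

open Classical in
theorem genRel_iff_collapse (A : Set ℕ) (x y : ℕ) :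
    genRel A x y ↔ (if x ∈ A then 0 else x + 1) = (if y ∈ A then 0 else y + 1) := by
  by_cases hx : x ∈ A <;> by_cases hy : y ∈ A <;> simp [genRel, hx, hy] <;> grind

theorem reducibleIn_genRel_eq_iff {A : Set ℕ} (hA : A.Nonempty) (d : TuringDegree') :
    ReducibleIn d (genRel A) Eq ↔ TuringDegree'.degSet A ≤ d := by
  induction d using Quotient.ind with | _ O
  show (∃ f : ℕ → ℕ, RecursiveIn' O ↑f ∧ ∀ x y, genRel A x y ↔ f x = f y) ↔
    RecursiveIn' O ↑(charFun A)
  constructor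
  · rintro ⟨f, hf, hred⟩
    obtain ⟨a, ha⟩ := hA
    have hdecide : Primrec fun m : ℕ => if m = f a then 1 else 0 :=
      Primrec.ite (Primrec.eq.comp Primrec.id (Primrec.const _)) (Primrec.const 1)
        (Primrec.const 0)
    convert (RecursiveIn'.of_primrec hdecide).comp_total hf using 2
    funext x
    simp [charFun, mem_iff_of_genRel_iff hred ha x]
  · intro hdec
    have hcollapse : Primrec fun m : ℕ => if m.unpair.1 = 1 then 0 else m.unpair.2 + 1 :=
      Primrec.ite (Primrec.eq.comp (Primrec.fst.comp Primrec.unpair) (Primrec.const 1))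
        (Primrec.const 0) (Primrec.succ.comp (Primrec.snd.comp Primrec.unpair))
    refine ⟨_, (RecursiveIn'.of_primrec hcollapse).comp_total
      (RecursiveIn'.pair_total hdec (RecursiveIn'.of_primrec (f := id) Primrec.id)),
      fun x y => ?_⟩
    rw [genRel_iff_collapse]
    simp only [charFun, Nat.unpair_pair, id]
    split_ifs <;> simp_all

theorem specRed_genRel_eq {A : Set ℕ} (hA : A.Nonempty) :
    SpecRed (genRel A) Eq = {d | TuringDegree'.degSet A ≤ d} :=
  Set.ext (reducibleIn_genRel_eq_iff hA)

/-- Every Turing degree is the degree of reducibility of some pair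
of equivalence relations, with spectrum exactly the cone above it. -/
theorem stmt_5 (a : TuringDegree') :
    ∃ R S : ℕ → ℕ → Prop, Equivalence R ∧ Equivalence S ∧
      SpecRed R S = {d | a ≤ d} := by
  induction a using Quotient.ind with | _ g
  refine ⟨genRel (codedGraph g), Eq, genRel_equivalence _, eq_equivalence, ?_⟩
  rw [specRed_genRel_eq (codedGraph_nonempty g), TuringDegree'.degSet_codedGraph]
  rfl
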